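/- arXiv:2402.16000 — 3 statements merged into one kernel-verified Lean document; each statement's English description precedes it below -/
import Mathlib

section
/- Let Z ∈ ℝ^{M×k} with k ≤ M be a matrix all of whose columns have Euclidean norm 1. Then log det(I + Z Zᵀ) = k log 2 if and only if the columns of Z are orthonormal. -/
/-!
By the Weinstein–Aronszajn identity, `det (1 + Z Zᵀ) = det (1 + Zᵀ Z) = ∏ᵢ (1 + λᵢ)`, where the
`λᵢ ≥ 0` are the eigenvalues of the Gram matrix `Zᵀ Z`; they sum to its trace, which is `k` for
unit columns. Since `log (1 + x) ≤ log 2 + (x - 1) / 2` with equality only at `x = 1`, summing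
gives `∑ᵢ log (1 + λᵢ) ≤ k log 2` with equality iff every `λᵢ = 1`, i.e. iff `Zᵀ Z = 1`.
-/

open Matrix

namespace Real

theorem log_one_add_le_log_two_add {x : ℝ} (hx : -1 < x) :
    log (1 + x) ≤ log 2 + (x - 1) / 2 := by
  have h := log_le_sub_one_of_pos (x := (1 + x) / 2) (by linarith)
  rw [log_div (by linarith) two_ne_zero] at h
  linarith

theorem log_one_add_eq_log_two_add_iff {x : ℝ} (hx : -1 < x) :
    log (1 + x) = log 2 + (x - 1) / 2 ↔ x = 1 := by
  refine ⟨fun h => ?_, fun h => by subst h; norm_num⟩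
  by_contra hne
  have hlt := log_lt_sub_one_of_pos (x := (1 + x) / 2) (by linarith) fun h' => hne (by linarith)
  rw [log_div (by linarith) two_ne_zero] at hlt
  linarith

theorem sum_log_one_add_eq_card_mul_log_two_iff {ι : Type*} [Fintype ι] (x : ι → ℝ)
    (hx : ∀ i, -1 < x i) (hsum : ∑ i, x i = Fintype.card ι) :
    ∑ i, log (1 + x i) = Fintype.card ι * log 2 ↔ ∀ i, x i = 1 := by
  set gap : ι → ℝ := fun i => log 2 + (x i - 1) / 2 - log (1 + x i)
  have hgap_sum : ∑ i, gap i = Fintype.card ι * log 2 - ∑ i, log (1 + x i) := by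
    simp only [gap, Finset.sum_sub_distrib, Finset.sum_add_distrib, ← Finset.sum_div, hsum]
    simp
  have hgap_nonneg : 0 ≤ gap := fun i => sub_nonneg.2 (log_one_add_le_log_two_add (hx i))
  calc ∑ i, log (1 + x i) = Fintype.card ι * log 2 ↔ ∑ i, gap i = 0 := by
        rw [hgap_sum, sub_eq_zero, eq_comm]
    _ ↔ ∀ i, gap i = 0 := by rw [Fintype.sum_eq_zero_iff_of_nonneg hgap_nonneg, funext_iff]; rfl
    _ ↔ ∀ i, x i = 1 := forall_congr' fun i => by
        rw [← log_one_add_eq_log_two_add_iff (hx i), sub_eq_zero, eq_comm]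

end Real

namespace Matrix

theorem trace_transpose_mul_self {m n R : Type*} [Fintype m] [Fintype n] [CommSemiring R]
    (Z : Matrix m n R) : (Zᵀ * Z).trace = ∑ j, ∑ i, Z i j ^ 2 := by
  simp [trace, mul_apply, sq]

namespace IsHermitian

variable {n 𝕜 : Type*} [Fintype n] [DecidableEq n] [RCLike 𝕜] {A : Matrix n n 𝕜}

theorem det_one_add (hA : A.IsHermitian) :
    det (1 + A) = ∏ i, (1 + (hA.eigenvalues i : 𝕜)) := by
  conv_lhs => rw [hA.spectral_theorem]
  rw [← map_one (Unitary.conjStarAlgAut 𝕜 _ hA.eigenvectorUnitary), ← map_add,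
    Unitary.conjStarAlgAut_apply, det_mul_right_comm, ← Unitary.coe_star,
    Unitary.coe_mul_star_self, one_mul, ← diagonal_one, diagonal_add, det_diagonal]
  simp

theorem eigenvalues_eq_one_iff (hA : A.IsHermitian) : hA.eigenvalues = 1 ↔ A = 1 := by
  refine ⟨fun h ↦ ?_, fun h ↦ ?_⟩
  · rw [hA.spectral_theorem, h]
    simp
  · ext i
    have hv : A *ᵥ hA.eigenvectorBasis i = hA.eigenvectorBasis i := by
      simp only [h, one_mulVec]
    rw [eigenvalues_eq, Pi.one_apply, hv, dotProduct_comm,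
      ← EuclideanSpace.inner_eq_star_dotProduct, inner_self_eq_norm_sq_to_K,
      hA.eigenvectorBasis.orthonormal.1 i]
    simp

end IsHermitian

end Matrix

theorem logdet_eq_iff_orthonormal_columns_general (M k : ℕ)
    (Z : Matrix (Fin M) (Fin k) ℝ) (hcols : ∀ j, ∑ i, (Z i j) ^ 2 = 1) :
    Real.log ((1 + Z * Zᵀ).det) = (k : ℝ) * Real.log 2 ↔ Zᵀ * Z = 1 := by
  have hZ : (Zᵀ * Z).PosSemidef := by simpa using posSemidef_conjTranspose_mul_self Z
  have hgt : ∀ i, -1 < hZ.1.eigenvalues i := fun i => by linarith [hZ.eigenvalues_nonneg i]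
  have htrace : ∑ i, hZ.1.eigenvalues i = Fintype.card (Fin k) := by
    simpa [trace_transpose_mul_self, hcols] using hZ.1.trace_eq_sum_eigenvalues.symm
  rw [det_one_add_mul_comm, hZ.1.det_one_add, ← hZ.1.eigenvalues_eq_one_iff, funext_iff]
  simp only [RCLike.ofReal_real_eq_id, id_eq, Pi.one_apply]
  rw [Real.log_prod fun i _ => (neg_lt_iff_pos_add'.1 (hgt i)).ne',
    ← Real.sum_log_one_add_eq_card_mul_log_two_iff _ hgt htrace, Fintype.card_fin]

/-- If `Z ∈ ℝ^{M×k}` with `k ≤ M` has columns of unit Euclidean norm, then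
`log det(I + Z Zᵀ) = k log 2` if and only if the columns of `Z` are orthonormal
(i.e. `Zᵀ Z = I`). -/
theorem logdet_eq_iff_orthonormal_columns (M k : ℕ) (hk : k ≤ M)
    (Z : Matrix (Fin M) (Fin k) ℝ) (hcols : ∀ j, ∑ i, (Z i j) ^ 2 = 1) :
    Real.log ((1 + Z * Zᵀ).det) = (k : ℝ) * Real.log 2 ↔ Zᵀ * Z = 1 :=
  logdet_eq_iff_orthonormal_columns_general M k Z hcols
end

section
/- Let C, D be symmetric positive semidefinite n×n real matrices with C ⪯ D (i.e., D − C positive semidefinite). Then 0 ≤ log det(I + D) − log det(I + C) ≤ log det(I + D − C). -/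
/-!
Write `D - C = Xᴴ X`. The matrix determinant lemma gives
`det (1 + D) = det (1 + C) * det (1 + X (1 + C)⁻¹ Xᴴ)`, and `0 ≤ X (1 + C)⁻¹ Xᴴ ≤ X Xᴴ`
because `(1 + C)⁻¹ ≤ 1`. Since the determinant is monotone on positive definite matrices,
the second factor lies between `1` and `det (1 + X Xᴴ) = det (1 + (D - C))`; now take
logarithms.
-/

open Matrix
open scoped MatrixOrder

namespace Matrix

variable {n : Type*} [DecidableEq n]

theorem posDef_of_one_le {S : Matrix n n ℝ} (hS : 1 ≤ S) : S.PosDef := by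
  simpa using PosDef.one.add_posSemidef (le_iff.mp hS)

variable [Fintype n]

open scoped Pointwise in
theorem PosSemidef.one_le_det_one_add {P : Matrix n n ℝ} (hP : P.PosSemidef) :
    1 ≤ (1 + P).det := by
  have hH : (1 + P).IsHermitian := isHermitian_one.add hP.isHermitian
  rw [hH.det_eq_prod_eigenvalues]
  refine Finset.one_le_prod fun i _ => ?_
  have hi : hH.eigenvalues i ∈ ({1} : Set ℝ) + spectrum ℝ P := by
    rw [spectrum.singleton_add_eq, map_one]
    exact hH.eigenvalues_mem_spectrum_real i
  obtain ⟨_, rfl, x, hx, hxi⟩ := hi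
  have hx_nonneg := spectrum_nonneg_of_nonneg hP.nonneg hx
  simp only [RCLike.ofReal_real_eq_id, id_eq, ← hxi]
  linarith

theorem PosDef.det_le_det_of_le {A B : Matrix n n ℝ} (hA : A.PosDef) (hAB : A ≤ B) :
    A.det ≤ B.det := by
  obtain ⟨X, hX⟩ := CStarAlgebra.nonneg_iff_eq_star_mul_self.mp (sub_nonneg.mpr hAB)
  have hB : B = A + Xᴴ * X := by rw [← star_eq_conjTranspose, ← hX]; abel
  rw [hB, det_add_mul _ _ hA.det_pos.ne'.isUnit, le_mul_iff_one_le_right hA.det_pos]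
  exact (hA.inv.posSemidef.mul_mul_conjTranspose_same X).one_le_det_one_add

theorem inv_le_one_of_one_le {S : Matrix n n ℝ} (hS : 1 ≤ S) : S⁻¹ ≤ 1 := by
  have hE : (S - 1).PosSemidef := le_iff.mp hS
  have hSpd := posDef_of_one_le hS
  have hSS : S * S⁻¹ = 1 := mul_nonsing_inv S hSpd.det_pos.ne'.isUnit
  have hSS' : S⁻¹ * S = 1 := nonsing_inv_mul S hSpd.det_pos.ne'.isUnit
  have key : 1 - S⁻¹ = S⁻¹ * ((S - 1)ᴴ * (S - 1) + (S - 1)) * S⁻¹ := by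
    rw [hE.isHermitian.eq]
    calc 1 - S⁻¹ = S⁻¹ * S * (S - 1) * S⁻¹ := by rw [hSS', one_mul, sub_mul, hSS, one_mul]
      _ = _ := by noncomm_ring
  rw [le_iff, key]
  simpa only [hSpd.inv.isHermitian.eq] using
    ((posSemidef_conjTranspose_mul_self _).add hE).conjTranspose_mul_mul_same S⁻¹

theorem det_add_le_det_mul_det_one_add {S E : Matrix n n ℝ} (hS : 1 ≤ S) (hE : 0 ≤ E) :
    (S + E).det ≤ S.det * (1 + E).det := by
  have hSpd := posDef_of_one_le hS
  obtain ⟨X, rfl⟩ := CStarAlgebra.nonneg_iff_eq_star_mul_self.mp hE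
  rw [star_eq_conjTranspose, det_add_mul _ _ hSpd.det_pos.ne'.isUnit, det_one_add_mul_comm Xᴴ X]
  refine mul_le_mul_of_nonneg_left ?_ hSpd.det_pos.le
  have hR : X * S⁻¹ * Xᴴ ≤ X * Xᴴ := by
    simpa only [mul_one, star_eq_conjTranspose] using
      star_right_conjugate_le_conjugate (inv_le_one_of_one_le hS) X
  have hRpd := PosDef.one.add_posSemidef (hSpd.inv.posSemidef.mul_mul_conjTranspose_same X)
  exact hRpd.det_le_det_of_le (add_le_add_right hR 1)

end Matrix

theorem logdet_monotone_loewner_general (n : ℕ) (C D : Matrix (Fin n) (Fin n) ℝ)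
    (hC : C.PosSemidef) (hCD : (D - C).PosSemidef) :
    0 ≤ Real.log ((1 + D).det) - Real.log ((1 + C).det) ∧
      Real.log ((1 + D).det) - Real.log ((1 + C).det) ≤ Real.log ((1 + (D - C)).det) := by
  have h1C : 1 ≤ 1 + C := le_add_of_nonneg_right hC.nonneg
  have h1E : 1 ≤ 1 + (D - C) := le_add_of_nonneg_right hCD.nonneg
  have hdetC := (posDef_of_one_le h1C).det_pos
  have hmono : (1 + C).det ≤ (1 + D).det :=
    (posDef_of_one_le h1C).det_le_det_of_le (add_le_add_right (le_iff.mpr hCD) 1)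
  have hsub : (1 + D).det ≤ (1 + C).det * (1 + (D - C)).det := by
    simpa using det_add_le_det_mul_det_one_add h1C hCD.nonneg
  refine ⟨sub_nonneg.mpr (Real.log_le_log hdetC hmono), ?_⟩
  rw [sub_le_iff_le_add, ← Real.log_mul (posDef_of_one_le h1E).det_pos.ne' hdetC.ne', mul_comm]
  exact Real.log_le_log (hdetC.trans_le hmono) hsub

/-- For symmetric positive semidefinite `C ⪯ D` (Löwner order),
`0 ≤ log det(I + D) − log det(I + C) ≤ log det(I + D − C)`. -/
theorem logdet_monotone_loewner (n : ℕ) (C D : Matrix (Fin n) (Fin n) ℝ)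
    (hC : C.PosSemidef) (hD : D.PosSemidef) (hCD : (D - C).PosSemidef) :
    0 ≤ Real.log ((1 + D).det) - Real.log ((1 + C).det) ∧
      Real.log ((1 + D).det) - Real.log ((1 + C).det) ≤ Real.log ((1 + (D - C)).det) :=
  logdet_monotone_loewner_general n C D hC hCD
end

section
/- Let A ∈ ℝ^{n×m} with rank(A) ≥ k, and let Ω ∈ ℝ^{d×n} be such that Ω U_k has full column rank k, where U_k are the top-k left singular vectors of A. Then for Y = ΩA and 1 ≤ j ≤ k: σ_j(Y) ≥ σ_j(A)/‖(Ω U_k)†‖₂; in particular Y has rank at least k. -/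
open Matrix

/-- The `j`-th largest singular value (0-indexed) of a real `m × n` matrix `A`,
defined as the square root of the `j`-th largest eigenvalue of `Aᴴ A`
(and `0` for out-of-range indices). -/
noncomputable def singularValue {m n : ℕ} (A : Matrix (Fin m) (Fin n) ℝ) (j : ℕ) : ℝ :=
  if h : j < n then
    Real.sqrt
      (((Matrix.isHermitian_conjTranspose_mul_self A).eigenvalues ∘
          Tuple.sort (Matrix.isHermitian_conjTranspose_mul_self A).eigenvalues)
        (Fin.rev ⟨j, h⟩))
  else 0

/-!
Let `Vⱼ` be the first `j + 1` right singular vectors of `A`. Since `A Vⱼ = Uⱼ₊₁ Dⱼ` with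
`Dⱼ = diag(σ₀(A), …, σⱼ(A))`, every unit vector `x = Vⱼ y` satisfies
`‖Ω A x‖ = ‖(Ω Uₖ)(Eⱼ Dⱼ y)‖ ≥ σ_{k-1}(Ω Uₖ) ‖Dⱼ y‖ ≥ σ_{k-1}(Ω Uₖ) σⱼ(A)`, where `Eⱼ` embeds
`ℝ^{j+1}` isometrically into `ℝ^k`. By Courant–Fischer, a `(j + 1)`-dimensional subspace on which
`‖Ω A x‖ ≥ c ‖x‖` forces `σⱼ(Ω A) ≥ c`. Both singular values on the right are positive when
`j = k - 1`, so `σ_{k-1}(Ω A) > 0` and `rank (Ω A) ≥ k`.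
-/

open Module

theorem Tuple.comp_sort_apply_rev_of_antitone {α : Type*} [LinearOrder α] {N n : ℕ}
    (g : Fin N → α) (hg : Antitone g) (e : Fin N ≃ Fin n) (j : Fin n) :
    ((g ∘ e.symm) ∘ Tuple.sort (g ∘ e.symm)) j.rev =
      g (Fin.cast (Fin.equiv_iff_eq.mp ⟨e⟩).symm j) := by
  obtain rfl : N = n := Fin.equiv_iff_eq.mp ⟨e⟩
  have hsort : g ∘ Fin.revPerm = g ∘ Tuple.sort g :=
    Tuple.comp_sort_eq_comp_iff_monotone.mpr (hg.comp Fin.rev_anti)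
  rw [Tuple.comp_perm_comp_sort_eq_comp_sort, ← hsort]
  simp

namespace LinearMap

variable {𝕜 E F : Type*} [RCLike 𝕜]
  [NormedAddCommGroup E] [InnerProductSpace 𝕜 E] [FiniteDimensional 𝕜 E]
  [NormedAddCommGroup F] [InnerProductSpace 𝕜 F] [FiniteDimensional 𝕜 F]

local notation "⟪" x ", " y "⟫" => inner 𝕜 x y

theorem IsSymmetric.eigenvalues_congr {T T' : E →ₗ[𝕜] E} (hT : T.IsSymmetric)
    (hT' : T'.IsSymmetric) (h : T = T') {n n' : ℕ} (hn : finrank 𝕜 E = n)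
    (hn' : finrank 𝕜 E = n') (i : Fin n) (i' : Fin n') (hi : (i : ℕ) = i') :
    hT.eigenvalues hn i = hT'.eigenvalues hn' i' := by
  subst h hn hn'
  rw [Fin.ext hi]

variable (T : E →ₗ[𝕜] F)

theorem norm_apply_sq_eq_sum (x : E) :
    ‖T x‖ ^ 2 = ∑ i : Fin (finrank 𝕜 E), T.singularValues i ^ 2 *
      ‖⟪T.isSymmetric_adjoint_comp_self.eigenvectorBasis rfl i, x⟫‖ ^ 2 := by
  set b := T.isSymmetric_adjoint_comp_self.eigenvectorBasis rfl
  have hb (i) : ⟪x, b i⟫ * ⟪b i, (adjoint T ∘ₗ T) x⟫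
      = ((T.singularValues i ^ 2 * ‖⟪b i, x⟫‖ ^ 2 : ℝ) : 𝕜) := by
    rw [← T.isSymmetric_adjoint_comp_self, T.isSymmetric_adjoint_comp_self.apply_eigenvectorBasis,
      inner_smul_left, sq_singularValues_fin _ rfl, RCLike.conj_ofReal, ← inner_conj_symm x]
    push_cast
    rw [← RCLike.mul_conj]
    ring
  have h := b.sum_inner_mul_inner x ((adjoint T ∘ₗ T) x)
  rw [Finset.sum_congr rfl fun i _ => hb i, ← RCLike.ofReal_sum, comp_apply, adjoint_inner_right,
    inner_self_eq_norm_sq_to_K] at h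
  exact_mod_cast h.symm

theorem singularValues_finrank_sub_one_mul_norm_le (x : E) :
    T.singularValues (finrank 𝕜 E - 1) * ‖x‖ ≤ ‖T x‖ := by
  set b := T.isSymmetric_adjoint_comp_self.eigenvectorBasis rfl
  refine le_of_sq_le_sq ?_ (norm_nonneg _)
  rw [mul_pow, ← b.sum_sq_norm_inner_right, Finset.mul_sum, norm_apply_sq_eq_sum]
  gcongr with i
  · exact T.singularValues_nonneg _
  · exact T.singularValues_antitone (Nat.le_sub_one_of_lt i.isLt)

theorem norm_apply_le_of_inner_eigenvectorBasis_eq_zero {j : ℕ} {x : E}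
    (hx : ∀ i : Fin (finrank 𝕜 E), (i : ℕ) < j →
      ⟪T.isSymmetric_adjoint_comp_self.eigenvectorBasis rfl i, x⟫ = 0) :
    ‖T x‖ ≤ T.singularValues j * ‖x‖ := by
  set b := T.isSymmetric_adjoint_comp_self.eigenvectorBasis rfl
  refine le_of_sq_le_sq ?_ (mul_nonneg (T.singularValues_nonneg _) (norm_nonneg _))
  rw [mul_pow, ← b.sum_sq_norm_inner_right, Finset.mul_sum, norm_apply_sq_eq_sum]
  refine Finset.sum_le_sum fun i _ => ?_
  by_cases hij : (i : ℕ) < j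
  · simp [b, hx i hij]
  · gcongr
    · exact T.singularValues_nonneg _
    · exact T.singularValues_antitone (not_lt.mp hij)

/-- Courant–Fischer, lower bound. -/
theorem le_singularValues_of_forall_mem {S : Submodule 𝕜 E} {j : ℕ} (hS : j < finrank 𝕜 S)
    {c : ℝ} (hc : ∀ x ∈ S, c * ‖x‖ ≤ ‖T x‖) : c ≤ T.singularValues j := by
  set b := T.isSymmetric_adjoint_comp_self.eigenvectorBasis rfl
  have hjE : j ≤ finrank 𝕜 E := hS.le.trans (Submodule.finrank_le S)
  -- a nonzero `x ∈ S` orthogonal to the first `j` eigenvectors exists by counting dimensions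
  let L : S →ₗ[𝕜] (Fin j → 𝕜) :=
    LinearMap.pi (fun i => innerₛₗ 𝕜 (b (Fin.castLE hjE i))) ∘ₗ S.subtype
  obtain ⟨x, hxL, hx0⟩ := Submodule.exists_mem_ne_zero_of_ne_bot
    (ker_ne_bot_of_finrank_lt (f := L) (by simpa using hS))
  have horth : ∀ i : Fin (finrank 𝕜 E), (i : ℕ) < j → ⟪b i, (x : E)⟫ = 0 := fun i hi =>
    congrFun (mem_ker.mp hxL) ⟨i, hi⟩
  have hxpos : 0 < ‖(x : E)‖ := norm_pos_iff.mpr (by simpa using hx0)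
  exact le_of_mul_le_mul_right ((hc x x.2).trans
    (T.norm_apply_le_of_inner_eigenvectorBasis_eq_zero horth)) hxpos

end LinearMap

namespace Matrix

variable {𝕜 : Type*} [RCLike 𝕜]

theorem conjTranspose_mul_self_submatrix {n p q : Type*} [Fintype n] [DecidableEq p]
    [DecidableEq q] {W : Matrix n p 𝕜} (hW : Wᴴ * W = 1) {e : q → p}
    (he : Function.Injective e) : (W.submatrix id e)ᴴ * W.submatrix id e = 1 := by
  rw [conjTranspose_submatrix, ← submatrix_mul _ _ _ _ _ Function.bijective_id, hW,
    submatrix_one _ he]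

theorem mul_submatrix_castLE_eq_of_svd {n m p : ℕ} {A : Matrix (Fin n) (Fin m) ℝ}
    {U : Matrix (Fin n) (Fin n) ℝ} {V : Matrix (Fin m) (Fin m) ℝ} {s : ℕ → ℝ} (hV : Vᵀ * V = 1)
    (hA : A = U * (of fun (i : Fin n) (j : Fin m) => if (i : ℕ) = j then s i else 0) * Vᵀ)
    (hpn : p ≤ n) (hpm : p ≤ m) :
    A * V.submatrix id (Fin.castLE hpm) =
      U.submatrix id (Fin.castLE hpn) * diagonal fun i : Fin p => s i := by
  have hVp : Vᵀ * V.submatrix id (Fin.castLE hpm) =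
      (1 : Matrix (Fin m) (Fin m) ℝ).submatrix id (Fin.castLE hpm) := by
    rw [← hV, submatrix_mul _ _ _ id _ Function.bijective_id, submatrix_id_id]
  rw [hA, Matrix.mul_assoc, hVp, Matrix.mul_assoc, ← Equiv.coe_refl, mul_submatrix_one]
  ext i t
  rw [mul_apply, mul_diagonal, Finset.sum_eq_single (Fin.castLE hpn t)]
  · simp
  · intro r _ hr
    have : (r : ℕ) ≠ t := fun h => hr (Fin.ext h)
    simp [this]
  · simp

variable {m n p : Type*} [Fintype m] [Fintype n] [Fintype p] [DecidableEq n] [DecidableEq p]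

theorem rank_eq_finrank_range_toEuclideanLin (B : Matrix m n 𝕜) :
    B.rank = finrank 𝕜 (LinearMap.range (toEuclideanLin B)) :=
  B.rank_eq_finrank_range_toLin (PiLp.basisFun 2 𝕜 m) (PiLp.basisFun 2 𝕜 n)

theorem norm_toEuclideanLin_of_conjTranspose_mul_self {W : Matrix n p 𝕜} (hW : Wᴴ * W = 1)
    (x : EuclideanSpace 𝕜 p) : ‖toEuclideanLin W x‖ = ‖x‖ := by
  refine (LinearMap.norm_map_iff_inner_map_map (toEuclideanLin W)).mpr (fun x y => ?_) x
  rw [← LinearMap.adjoint_inner_left, ← toEuclideanLin_conjTranspose_eq_adjoint,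
    ← LinearMap.comp_apply, ← toLpLin_mul_same, hW, toLpLin_one, LinearMap.id_apply]

theorem mul_norm_le_norm_toEuclideanLin_diagonal {d : p → 𝕜} {c : ℝ} (hd : ∀ i, c ≤ ‖d i‖)
    (x : EuclideanSpace 𝕜 p) : c * ‖x‖ ≤ ‖toEuclideanLin (diagonal d) x‖ := by
  rcases lt_or_ge c 0 with hc | hc
  · exact (mul_nonpos_of_nonpos_of_nonneg hc.le (norm_nonneg _)).trans (norm_nonneg _)
  refine le_of_sq_le_sq ?_ (norm_nonneg _)
  rw [mul_pow, EuclideanSpace.norm_sq_eq, EuclideanSpace.norm_sq_eq, Finset.mul_sum]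
  refine Finset.sum_le_sum fun i _ => ?_
  simp only [toLpLin_apply, PiLp.toLp_apply, mulVec_diagonal, norm_mul, mul_pow]
  gcongr
  exact hd i

end Matrix

section SingularValue

variable {m n : ℕ} (B : Matrix (Fin m) (Fin n) ℝ)

theorem singularValue_eq_singularValues : singularValue B = (toEuclideanLin B).singularValues := by
  funext j
  unfold singularValue
  split_ifs with hj
  · rw [(toEuclideanLin B).singularValues_of_lt (n := n) (by simp) hj]
    have hM := isHermitian_conjTranspose_mul_self B
    congr 1
    -- `hM.eigenvalues` is a reindexing of the antitone `hM.eigenvalues₀`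
    refine (Tuple.comp_sort_apply_rev_of_antitone _ hM.eigenvalues₀_antitone
      (Fintype.equivOfCardEq (Fintype.card_fin _)) _).trans ?_
    apply LinearMap.IsSymmetric.eigenvalues_congr
    · rw [← toEuclideanLin_conjTranspose_eq_adjoint, toLpLin_mul_same]
    · rfl
  · rw [LinearMap.singularValues_of_finrank_le]
    simpa using hj

theorem singularValue_nonneg (j : ℕ) : 0 ≤ singularValue B j := by
  rw [singularValue_eq_singularValues]
  exact LinearMap.singularValues_nonneg _ j

theorem singularValue_antitone : Antitone (singularValue B) := by
  rw [singularValue_eq_singularValues]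
  exact LinearMap.singularValues_antitone _

theorem singularValue_pos_iff_lt_rank {j : ℕ} : 0 < singularValue B j ↔ j < B.rank := by
  rw [singularValue_eq_singularValues, rank_eq_finrank_range_toEuclideanLin]
  exact LinearMap.singularValues_pos_iff_lt_finrank_range _

theorem singularValue_pred_mul_norm_le (x : EuclideanSpace ℝ (Fin n)) :
    singularValue B (n - 1) * ‖x‖ ≤ ‖toEuclideanLin B x‖ := by
  simpa [singularValue_eq_singularValues] using
    (toEuclideanLin B).singularValues_finrank_sub_one_mul_norm_le x

theorem le_singularValue_of_isometry {p : ℕ} {W : Matrix (Fin n) (Fin p) ℝ} (hW : Wᴴ * W = 1)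
    {j : ℕ} (hj : j < p) {c : ℝ} (hc : ∀ y, c * ‖y‖ ≤ ‖toEuclideanLin (B * W) y‖) :
    c ≤ singularValue B j := by
  have hinj : Function.Injective (toEuclideanLin W) := fun y z h => by
    rw [← sub_eq_zero, ← norm_eq_zero, ← norm_toEuclideanLin_of_conjTranspose_mul_self hW,
      map_sub, h, sub_self, norm_zero]
  rw [singularValue_eq_singularValues]
  refine (toEuclideanLin B).le_singularValues_of_forall_mem
    (S := LinearMap.range (toEuclideanLin W)) (by simpa [LinearMap.finrank_range_of_inj hinj]) ?_
  rintro _ ⟨y, rfl⟩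
  rw [norm_toEuclideanLin_of_conjTranspose_mul_self hW, ← LinearMap.comp_apply,
    ← toLpLin_mul_same]
  exact hc y

end SingularValue

theorem mul_singularValue_le_singularValue_sketch {n m d k : ℕ} (hk : k ≤ n) (hkm : k ≤ m)
    {A : Matrix (Fin n) (Fin m) ℝ} {U : Matrix (Fin n) (Fin n) ℝ} {V : Matrix (Fin m) (Fin m) ℝ}
    (hV : Vᵀ * V = 1)
    (hSVD : A = U * (of fun (i : Fin n) (j : Fin m) =>
      if (i : ℕ) = (j : ℕ) then singularValue A (i : ℕ) else 0) * Vᵀ)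
    (Om : Matrix (Fin d) (Fin n) ℝ) {j : ℕ} (hj : j < k) :
    singularValue (Om * U.submatrix id (Fin.castLE hk)) (k - 1) * singularValue A j ≤
      singularValue (Om * A) j := by
  have hjm : j + 1 ≤ m := hj.trans_le hkm
  have hUE : U.submatrix id (Fin.castLE hk) * (1 : Matrix (Fin k) (Fin k) ℝ).submatrix id
      (Fin.castLE hj) = U.submatrix id (Fin.castLE (hj.trans_le hk)) :=
    (mul_submatrix_one (Equiv.refl _) _ _).trans (submatrix_submatrix _ _ _ _ _)
  have hfac : Om * A * V.submatrix id (Fin.castLE hjm) = Om * U.submatrix id (Fin.castLE hk) *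
      ((1 : Matrix (Fin k) (Fin k) ℝ).submatrix id (Fin.castLE hj) *
        diagonal fun i : Fin (j + 1) => singularValue A i) := by
    rw [Matrix.mul_assoc, mul_submatrix_castLE_eq_of_svd hV hSVD (hj.trans_le hk) hjm,
      Matrix.mul_assoc, ← Matrix.mul_assoc _ (submatrix 1 _ _), hUE]
  set X := Om * U.submatrix id (Fin.castLE hk)
  set Vj := V.submatrix id (Fin.castLE hjm)
  set Ej := (1 : Matrix (Fin k) (Fin k) ℝ).submatrix id (Fin.castLE hj)
  set Dj := diagonal fun i : Fin (j + 1) => singularValue A i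
  have hVj : Vjᴴ * Vj = 1 := conjTranspose_mul_self_submatrix
    (by rwa [conjTranspose_eq_transpose_of_trivial]) (Fin.castLE_injective _)
  have hEj : Ejᴴ * Ej = 1 := conjTranspose_mul_self_submatrix (by simp) (Fin.castLE_injective _)
  have hDj (i : Fin (j + 1)) : singularValue A j ≤ ‖singularValue A i‖ := by
    rw [Real.norm_of_nonneg (singularValue_nonneg A i)]
    exact singularValue_antitone A (Nat.lt_succ_iff.mp i.isLt)
  refine le_singularValue_of_isometry _ hVj j.lt_succ_self fun y => ?_
  rw [hfac, toLpLin_mul_same _ X, toLpLin_mul_same _ Ej, LinearMap.comp_apply, LinearMap.comp_apply]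
  calc singularValue X (k - 1) * singularValue A j * ‖y‖
      ≤ singularValue X (k - 1) * ‖toEuclideanLin Dj y‖ := by
        rw [mul_assoc]
        exact mul_le_mul_of_nonneg_left (mul_norm_le_norm_toEuclideanLin_diagonal hDj y)
          (singularValue_nonneg X _)
    _ = singularValue X (k - 1) * ‖toEuclideanLin Ej (toEuclideanLin Dj y)‖ := by
        rw [norm_toEuclideanLin_of_conjTranspose_mul_self hEj]
    _ ≤ ‖toEuclideanLin X (toEuclideanLin Ej (toEuclideanLin Dj y))‖ :=
        singularValue_pred_mul_norm_le X _

theorem sketch_singular_value_lower_bound_general (n m d k : ℕ) (hk : k ≤ n)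
    (A : Matrix (Fin n) (Fin m) ℝ) (hrank : k ≤ A.rank)
    (U : Matrix (Fin n) (Fin n) ℝ) (V : Matrix (Fin m) (Fin m) ℝ)
    (hV : Vᵀ * V = 1)
    (hSVD : A = U * (Matrix.of fun (i : Fin n) (j : Fin m) =>
      if (i : ℕ) = (j : ℕ) then singularValue A (i : ℕ) else 0) * Vᵀ)
    (Om : Matrix (Fin d) (Fin n) ℝ)
    (Uk : Matrix (Fin n) (Fin k) ℝ) (hUk : Uk = U.submatrix id (Fin.castLE hk))
    (hfull : (Om * Uk).rank = k) :
    (∀ j, j < k →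
        singularValue A j / (singularValue (Om * Uk) (k - 1))⁻¹
          ≤ singularValue (Om * A) j) ∧
      k ≤ (Om * A).rank := by
  subst hUk
  have hkm : k ≤ m := hrank.trans A.rank_le_width
  have key (j : ℕ) (hj : j < k) := mul_singularValue_le_singularValue_sketch hk hkm hV hSVD Om hj
  refine ⟨fun j hj => by simpa [div_inv_eq_mul, mul_comm] using key j hj, ?_⟩
  rcases Nat.eq_zero_or_pos k with rfl | hk0
  · exact Nat.zero_le _
  have hpos : 0 < singularValue (Om * A) (k - 1) :=
    (mul_pos ((singularValue_pos_iff_lt_rank _).mpr (by omega))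
      ((singularValue_pos_iff_lt_rank _).mpr (by omega))).trans_le (key (k - 1) (by omega))
  have hrankY := (singularValue_pos_iff_lt_rank _).mp hpos
  omega

/-- Sketching preserves leading singular values: let `A = U Σ Vᵀ` be an SVD of
`A ∈ ℝ^{n×m}` with `rank A ≥ k`, let `Uₖ` be the top-`k` left singular vectors, and let
`Ω ∈ ℝ^{d×n}` be such that `Ω Uₖ` has full column rank `k`. Then for `Y = Ω A` and
`0 ≤ j < k`: `σ_j(Y) ≥ σ_j(A)/‖(Ω Uₖ)†‖₂`, where for a full column rank matrix
`‖(Ω Uₖ)†‖₂ = σ_{k-1}(Ω Uₖ)⁻¹` (the reciprocal of the smallest singular value);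
in particular `Y` has rank at least `k`. -/
theorem sketch_singular_value_lower_bound (n m d k : ℕ) (hk : k ≤ n)
    (A : Matrix (Fin n) (Fin m) ℝ) (hrank : k ≤ A.rank)
    (U : Matrix (Fin n) (Fin n) ℝ) (V : Matrix (Fin m) (Fin m) ℝ)
    (hU : Uᵀ * U = 1) (hV : Vᵀ * V = 1)
    (hSVD : A = U * (Matrix.of fun (i : Fin n) (j : Fin m) =>
      if (i : ℕ) = (j : ℕ) then singularValue A (i : ℕ) else 0) * Vᵀ)
    (Om : Matrix (Fin d) (Fin n) ℝ)
    (Uk : Matrix (Fin n) (Fin k) ℝ) (hUk : Uk = U.submatrix id (Fin.castLE hk))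
    (hfull : (Om * Uk).rank = k) :
    (∀ j, j < k →
        singularValue A j / (singularValue (Om * Uk) (k - 1))⁻¹
          ≤ singularValue (Om * A) j) ∧
      k ≤ (Om * A).rank :=
  sketch_singular_value_lower_bound_general n m d k hk A hrank U V hV hSVD Om Uk hUk hfull
end
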